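/- arXiv:1811.04616 — 3 statements merged into one kernel-verified Lean document; each statement's English description precedes it below -/
import Mathlib

section
/- Let C = {1,…,k} with k ≥ 3 be a cycle, and let S₁ = {1,2}, S₂ = {2,3}, S₃ = {3,4,…,k,1}. Consider a hedonic game where every player i ∈ {1,2,3} has preferences {i} ≻ᵢ Sᵢ ≻ᵢ S_{i−1} ≻ᵢ T for all other coalitions T containing i (with S₀ = S₃), and every player j ∈ S₃ \ {1,3} most prefers S₃. Then for every partition π of C into coalitions, at least one of S₁, S₂, S₃ strongly blocks π or some player i ∈ {1,2,3} is in a singleton {i} in π. -/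
/-!
Write a, b, c for players 1, 2, 3, so S₁ = {a, b}, S₂ = {b, c} and a, c ∈ S₃ ∌ b; nothing
else about the cycle matters. Assume none of a, b, c is alone and look at the cell of b.
If it is S₂, then c's cell is S₂ too, a's cell is neither S₁ nor S₃, and S₃ blocks.
If it is S₁, then a's cell is S₁ too, c's cell is neither S₂ nor S₃, and S₂ blocks.
Otherwise b ranks S₁ above its cell, a ranks S₁ above every coalition but {a}, and S₁ blocks.
-/

variable {α : Type*}

def StronglyBlocks (v : α → Set α → ℝ) (π : α → Set α) (T : Set α) : Prop :=
  ∀ i ∈ T, v i T > v i (π i)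

theorem stronglyBlocks_pair {v : α → Set α → ℝ} {π : α → Set α} {a b : α}
    (ha : v a {a, b} > v a (π a)) (hb : v b {a, b} > v b (π b)) :
    StronglyBlocks v π {a, b} := by
  rintro i (rfl | rfl)
  exacts [ha, hb]

theorem pair_ne_pair {a b c : α} (hab : a ≠ b) (hac : a ≠ c) : ({a, b} : Set α) ≠ {b, c} :=
  ne_of_mem_of_not_mem' (a := a) (by simp) (by simp [hab, hac])

section Partition

variable {π : α → Set α} (hpart : ∀ i j, i ∈ π j → π i = π j)
include hpart

theorem cell_eq_of_mem {i j : α} {T : Set α} (hj : π j = T) (hi : i ∈ T) : π i = T :=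
  (hpart i j (hj ▸ hi)).trans hj

theorem cell_ne_of_mem {i j : α} {T : Set α} (hj : π j ≠ T) (hjT : j ∈ T) : π i ≠ T :=
  fun hi => hj (cell_eq_of_mem hpart hi hjT)

end Partition

section CyclicGame

variable {v : α → Set α → ℝ} {π : α → Set α} {a b c : α} {S3 : Set α}

theorem stronglyBlocks_S3_of_cell_b_eq_S2 (hmem : ∀ i, i ∈ π i)
    (hpart : ∀ i j, i ∈ π j → π i = π j) (hab : a ≠ b) (hac : a ≠ c)
    (ha3 : a ∈ S3) (hc3 : c ∈ S3) (hb3 : b ∉ S3) (hA : π a ≠ {a})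
    (h1c : ∀ T, a ∈ T → T ≠ {a} → T ≠ {a, b} → T ≠ S3 → v a S3 > v a T)
    (h3b : v c S3 > v c {b, c})
    (h4 : ∀ j ∈ S3, j ≠ a → j ≠ c → ∀ T, j ∈ T → T ≠ S3 → v j S3 > v j T)
    (hb : π b = {b, c}) : StronglyBlocks v π S3 := by
  have hc : π c = {b, c} := cell_eq_of_mem hpart hb (by simp)
  have hc3' : π c ≠ S3 := hc ▸ ne_of_mem_of_not_mem' (by simp) hb3
  have ha3' : π a ≠ S3 := cell_ne_of_mem hpart hc3' hc3
  have ha1 : π a ≠ {a, b} := cell_ne_of_mem hpart (hb ▸ (pair_ne_pair hab hac).symm) (by simp)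
  intro j hj
  by_cases hja : j = a
  · subst hja
    exact h1c _ (hmem j) hA ha1 ha3'
  by_cases hjc : j = c
  · subst hjc
    rwa [hc]
  exact h4 j hj hja hjc _ (hmem j) (cell_ne_of_mem hpart ha3' ha3)

theorem stronglyBlocks_S2_of_cell_b_eq_S1 (hmem : ∀ i, i ∈ π i)
    (hpart : ∀ i j, i ∈ π j → π i = π j) (hab : a ≠ b) (hac : a ≠ c)
    (ha3 : a ∈ S3) (hb3 : b ∉ S3) (hC : π c ≠ {c})
    (h2b : v b {b, c} > v b {a, b})
    (h3c : ∀ T, c ∈ T → T ≠ {c} → T ≠ S3 → T ≠ {b, c} → v c {b, c} > v c T)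
    (hb : π b = {a, b}) : StronglyBlocks v π {b, c} := by
  have ha : π a = {a, b} := cell_eq_of_mem hpart hb (by simp)
  have ha3' : π a ≠ S3 := ha ▸ ne_of_mem_of_not_mem' (by simp) hb3
  have hc3 : π c ≠ S3 := cell_ne_of_mem hpart ha3' ha3
  have hc2 : π c ≠ {b, c} := cell_ne_of_mem hpart (hb ▸ pair_ne_pair hab hac) (by simp)
  refine stronglyBlocks_pair ?_ (h3c _ (hmem c) hC hc3 hc2)
  rwa [hb]

theorem stronglyBlocks_S1_of_cell_b_ne (hmem : ∀ i, i ∈ π i)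
    (hpart : ∀ i j, i ∈ π j → π i = π j) (hA : π a ≠ {a}) (hB : π b ≠ {b})
    (h1b : v a {a, b} > v a S3)
    (h1c : ∀ T, a ∈ T → T ≠ {a} → T ≠ {a, b} → T ≠ S3 → v a S3 > v a T)
    (h2c : ∀ T, b ∈ T → T ≠ {b} → T ≠ {b, c} → T ≠ {a, b} → v b {a, b} > v b T)
    (hb2 : π b ≠ {b, c}) (hb1 : π b ≠ {a, b}) : StronglyBlocks v π {a, b} := by
  refine stronglyBlocks_pair ?_ (h2c _ (hmem b) hB hb2 hb1)
  by_cases ha3 : π a = S3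
  · rwa [ha3]
  have ha1 : π a ≠ {a, b} := cell_ne_of_mem hpart hb1 (by simp)
  exact (h1c _ (hmem a) hA ha1 ha3).trans h1b

theorem stronglyBlocks_or_singleton (hmem : ∀ i, i ∈ π i)
    (hpart : ∀ i j, i ∈ π j → π i = π j) (hab : a ≠ b) (hac : a ≠ c)
    (ha3 : a ∈ S3) (hc3 : c ∈ S3) (hb3 : b ∉ S3)
    (h1b : v a {a, b} > v a S3)
    (h1c : ∀ T, a ∈ T → T ≠ {a} → T ≠ {a, b} → T ≠ S3 → v a S3 > v a T)
    (h2b : v b {b, c} > v b {a, b})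
    (h2c : ∀ T, b ∈ T → T ≠ {b} → T ≠ {b, c} → T ≠ {a, b} → v b {a, b} > v b T)
    (h3b : v c S3 > v c {b, c})
    (h3c : ∀ T, c ∈ T → T ≠ {c} → T ≠ S3 → T ≠ {b, c} → v c {b, c} > v c T)
    (h4 : ∀ j ∈ S3, j ≠ a → j ≠ c → ∀ T, j ∈ T → T ≠ S3 → v j S3 > v j T) :
    StronglyBlocks v π {a, b} ∨ StronglyBlocks v π {b, c} ∨ StronglyBlocks v π S3 ∨
      (π a = {a} ∨ π b = {b} ∨ π c = {c}) := by
  by_cases hA : π a = {a}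
  · simp [hA]
  by_cases hB : π b = {b}
  · simp [hB]
  by_cases hC : π c = {c}
  · simp [hC]
  by_cases hb2 : π b = {b, c}
  · exact .inr <| .inr <| .inl <|
      stronglyBlocks_S3_of_cell_b_eq_S2 hmem hpart hab hac ha3 hc3 hb3 hA h1c h3b h4 hb2
  by_cases hb1 : π b = {a, b}
  · exact .inr <| .inl <|
      stronglyBlocks_S2_of_cell_b_eq_S1 hmem hpart hab hac ha3 hb3 hC h2b h3c hb1
  exact .inl <| stronglyBlocks_S1_of_cell_b_ne hmem hpart hA hB h1b h1c h2c hb2 hb1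

end CyclicGame

/- Players `1,…,k` of the paper are `Fin k` (player `i` ↦ `i-1`), so `S1 = {1,2}`,
`S2 = {2,3}`, `S3 = {3,…,k,1}` become `{0,1}`, `{1,2}`, `univ \ {1}`; preferences are given by
utility functions `v i`. -/
theorem stmt4 (k : ℕ) (hk : 3 ≤ k)
    (v : Fin k → Set (Fin k) → ℝ)
    (S1 S2 S3 : Set (Fin k))
    (hS1 : S1 = {⟨0, by omega⟩, ⟨1, by omega⟩})
    (hS2 : S2 = {⟨1, by omega⟩, ⟨2, by omega⟩})
    (hS3 : S3 = Set.univ \ {⟨1, by omega⟩})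
    -- player 1 (here `0`): {1} ≻ S1 ≻ S0 = S3 ≻ everything else containing it
    (h1b : v ⟨0, by omega⟩ S1 > v ⟨0, by omega⟩ S3)
    (h1c : ∀ T : Set (Fin k), (⟨0, by omega⟩ : Fin k) ∈ T →
      T ≠ {⟨0, by omega⟩} → T ≠ S1 → T ≠ S3 → v ⟨0, by omega⟩ S3 > v ⟨0, by omega⟩ T)
    -- player 2 (here `1`): {2} ≻ S2 ≻ S1 ≻ everything else containing it
    (h2b : v ⟨1, by omega⟩ S2 > v ⟨1, by omega⟩ S1)
    (h2c : ∀ T : Set (Fin k), (⟨1, by omega⟩ : Fin k) ∈ T →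
      T ≠ {⟨1, by omega⟩} → T ≠ S2 → T ≠ S1 → v ⟨1, by omega⟩ S1 > v ⟨1, by omega⟩ T)
    -- player 3 (here `2`): {3} ≻ S3 ≻ S2 ≻ everything else containing it
    (h3b : v ⟨2, by omega⟩ S3 > v ⟨2, by omega⟩ S2)
    (h3c : ∀ T : Set (Fin k), (⟨2, by omega⟩ : Fin k) ∈ T →
      T ≠ {⟨2, by omega⟩} → T ≠ S3 → T ≠ S2 → v ⟨2, by omega⟩ S2 > v ⟨2, by omega⟩ T)
    -- every other player of S3 most prefers S3
    (h4 : ∀ j ∈ S3, j ≠ ⟨0, by omega⟩ → j ≠ ⟨2, by omega⟩ →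
      ∀ T : Set (Fin k), j ∈ T → T ≠ S3 → v j S3 > v j T)
    -- π is a partition, given by its cells
    (π : Fin k → Set (Fin k)) (hmem : ∀ i, i ∈ π i)
    (hpart : ∀ i j, i ∈ π j → π i = π j) :
    (∀ i ∈ S1, v i S1 > v i (π i)) ∨ (∀ i ∈ S2, v i S2 > v i (π i)) ∨
    (∀ i ∈ S3, v i S3 > v i (π i)) ∨
    (π ⟨0, by omega⟩ = {⟨0, by omega⟩} ∨ π ⟨1, by omega⟩ = {⟨1, by omega⟩} ∨
      π ⟨2, by omega⟩ = {⟨2, by omega⟩}) := by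
  subst hS1 hS2
  exact stronglyBlocks_or_singleton hmem hpart (by simp [Fin.ext_iff]) (by simp [Fin.ext_iff])
    (by simp [hS3, Fin.ext_iff]) (by simp [hS3, Fin.ext_iff]) (by simp [hS3])
    h1b h1c h2b h2c h3b h3c h4
end

section
/- Let T be a rooted tree on player set N and suppose for each i ∈ N a coalition B_i is chosen with i ∈ B_i ⊆ desc(i), B_i connected in T, and v_j(B_i) ≥ v_j(B_j) for every j ∈ B_i. Then the partition π produced by recursively taking B_r for the root r and, for each child c of B_r, the partition of desc(c) produced recursively, is a partition of N into connected coalitions such that for every player j, v_j(π(j)) ≥ v_j(B_j). -/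
/-!
Give every player `j` a head: the root heads itself, and a non-root `j` takes the head of its
parent if it lies in that head's coalition, and heads `B j` otherwise; put `π j = B (head j)`.
Then `j ∈ π j` and `v j (B j) ≤ v j (π j)` come straight from the hypotheses on `B`. For the
partition property, let `a` be a head and `i ∈ B a`, so `i` descends from `a`. A connected set
containing `i` and a non-descendant of `i` must use the only edge leaving `desc i`, the one from
`i` to its parent; so the tree path from `i` up to `a` lies in `B a`, and every vertex on it
inherits the head `a`.
-/

open Function

section RootedTree

variable {N : Type*} {parent : N → N} {r i j x y : N}

def descendants (parent : N → N) (i : N) : Set N := {j | ∃ k : ℕ, parent^[k] j = i}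

abbrev treeGraph (parent : N → N) : SimpleGraph N := SimpleGraph.fromRel fun a b => parent a = b

theorem self_mem_descendants : i ∈ descendants parent i := ⟨0, rfl⟩

theorem mem_descendants_of_parent_mem (h : parent j ∈ descendants parent i) :
    j ∈ descendants parent i :=
  let ⟨k, hk⟩ := h
  ⟨k + 1, hk⟩

theorem eq_parent_of_adj_of_mem_descendants (hadj : (treeGraph parent).Adj x y)
    (hx : x ∈ descendants parent i) (hy : y ∉ descendants parent i) : y = parent i := by
  obtain ⟨-, hxy | hyx⟩ := hadj
  · obtain ⟨k, hk⟩ := hx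
    cases k with
    | zero => rw [← hxy, ← hk, iterate_zero_apply]
    | succ k => exact absurd ⟨k, by rwa [← hxy, ← iterate_succ_apply]⟩ hy
  · exact absurd (mem_descendants_of_parent_mem (hyx ▸ hx)) hy

theorem parent_mem_of_preconnected {S : Set N} {w : N}
    (hS : ((treeGraph parent).induce S).Preconnected) (hi : i ∈ S) (hw : w ∈ S)
    (hwi : w ∉ descendants parent i) : parent i ∈ S := by
  obtain ⟨p⟩ := hS ⟨i, hi⟩ ⟨w, hw⟩
  obtain ⟨d, -, hd, hd'⟩ := p.exists_boundary_dart {x | (x : N) ∈ descendants parent i}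
    self_mem_descendants hwi
  rw [← eq_parent_of_adj_of_mem_descendants d.adj hd hd']
  exact d.snd.2

theorem iterate_eq_root_of_le (hroot : parent r = r) {d n : ℕ} (hd : parent^[d] x = r)
    (hn : d ≤ n) : parent^[n] x = r := by
  rw [← Nat.sub_add_cancel hn, iterate_add_apply, hd, iterate_fixed hroot]

theorem eq_of_mem_descendants_of_mem_descendants (hroot : parent r = r)
    (hreach : ∀ i, ∃ k : ℕ, parent^[k] i = r) (hxy : x ∈ descendants parent y)
    (hyx : y ∈ descendants parent x) : x = y := by
  obtain ⟨k, rfl⟩ := hxy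
  obtain ⟨m, hm⟩ := hyx
  rcases Nat.eq_zero_or_pos (m + k) with hmk | hmk
  · rw [Nat.add_eq_zero_iff.mp hmk |>.2, iterate_zero_apply]
  have hper : IsPeriodicPt parent (m + k) x := by
    rw [IsPeriodicPt, IsFixedPt, iterate_add_apply, hm]
  obtain ⟨d, hd⟩ := hreach x
  have hxr : x = r := by
    rw [← (hper.mul_const d).eq]
    exact iterate_eq_root_of_le hroot hd (Nat.le_mul_of_pos_left d hmk)
  rw [hxr, iterate_fixed hroot]

end RootedTree

section Head

variable {N : Type*} {parent : N → N} {r : N}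

open scoped Classical in
noncomputable def depth (hreach : ∀ i, ∃ k : ℕ, parent^[k] i = r) (j : N) : ℕ :=
  Nat.find (hreach j)

theorem iterate_depth (hreach : ∀ i, ∃ k : ℕ, parent^[k] i = r) (j : N) :
    parent^[depth hreach j] j = r := by
  classical
  exact Nat.find_spec (hreach j)

theorem depth_parent_lt (hreach : ∀ i, ∃ k : ℕ, parent^[k] i = r) {j : N} (hj : j ≠ r) :
    depth hreach (parent j) < depth hreach j := by
  classical
  have hpos : 0 < depth hreach j := Nat.pos_of_ne_zero fun h => hj <| by
    simpa [h] using iterate_depth hreach j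
  have h : parent^[depth hreach j - 1] (parent j) = r := by
    rw [← iterate_succ_apply, Nat.succ_eq_add_one, Nat.sub_add_cancel hpos]
    exact iterate_depth hreach j
  exact (Nat.find_le h).trans_lt (Nat.sub_lt hpos one_pos)

noncomputable def head (hreach : ∀ i, ∃ k : ℕ, parent^[k] i = r) (B : N → Set N) (j : N) : N :=
  open scoped Classical in
  if j = r then r
  else if j ∈ B (head hreach B (parent j)) then head hreach B (parent j) else j
termination_by depth hreach j
decreasing_by exact depth_parent_lt hreach ‹_›

variable (hreach : ∀ i, ∃ k : ℕ, parent^[k] i = r) (B : N → Set N)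

theorem head_root : head hreach B r = r := by
  rw [head, if_pos rfl]

open scoped Classical in
theorem head_of_ne_root {j : N} (hj : j ≠ r) :
    head hreach B j =
      if j ∈ B (head hreach B (parent j)) then head hreach B (parent j) else j := by
  rw [head, if_neg hj]

theorem mem_head (hB : ∀ i, i ∈ B i) (j : N) : j ∈ B (head hreach B j) := by
  induction j using head.induct hreach B with
  | case1 => rw [head_root]; exact hB r
  | case2 j hj hmem _ => rwa [head_of_ne_root hreach B hj, if_pos hmem]
  | case3 j hj hmem _ =>
    rw [head_of_ne_root hreach B hj, if_neg hmem]
    exact hB j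

theorem head_head (j : N) : head hreach B (head hreach B j) = head hreach B j := by
  induction j using head.induct hreach B with
  | case1 => rw [head_root, head_root]
  | case2 j hj hmem ih => rwa [head_of_ne_root hreach B hj, if_pos hmem]
  | case3 j hj hmem _ =>
    rw [head_of_ne_root hreach B hj, if_neg hmem, head_of_ne_root hreach B hj, if_neg hmem]

theorem head_eq_of_mem (hroot : parent r = r) (hB : ∀ i, i ∈ B i)
    (hconn : ∀ i, ((treeGraph parent).induce (B i)).Preconnected) {a i : N}
    (ha : head hreach B a = a) (hi : i ∈ B a) (hia : i ∈ descendants parent a) :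
    head hreach B i = a := by
  obtain ⟨k, hk⟩ := hia
  induction k generalizing i with
  | zero =>
    obtain rfl : i = a := hk
    exact ha
  | succ k ih =>
    by_cases hne : i = a
    · rwa [hne]
    have hai : a ∉ descendants parent i := fun h =>
      hne (eq_of_mem_descendants_of_mem_descendants hroot hreach ⟨k + 1, hk⟩ h)
    have hir : i ≠ r := by
      rintro rfl
      exact hai (hreach a)
    have hpi : parent i ∈ B a := parent_mem_of_preconnected (hconn a) hi (hB a) hai
    rw [head_of_ne_root hreach B hir, ih hpi hk, if_pos hi]

end Head

theorem stmt11_general {N : Type*} (r : N) (parent : N → N)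
    (hroot : parent r = r) (hreach : ∀ i : N, ∃ k : ℕ, parent^[k] i = r)
    (desc : N → Set N) (hdesc : ∀ i, desc i = {j | ∃ k : ℕ, parent^[k] j = i})
    (G : SimpleGraph N) (hG : G = SimpleGraph.fromRel (fun a b => parent a = b))
    (v : N → Set N → ℝ) (B : N → Set N)
    (hB1 : ∀ i, i ∈ B i) (hB2 : ∀ i, B i ⊆ desc i)
    (hB3 : ∀ i, (G.induce (B i)).Connected)
    (hB4 : ∀ i, ∀ j ∈ B i, v j (B j) ≤ v j (B i)) :
    ∃ π : N → Set N,
      (∀ j, j ∈ π j) ∧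
      (∀ i j, i ∈ π j → π i = π j) ∧
      (∀ j, ∃ i, π j = B i) ∧
      (∀ j, (G.induce (π j)).Connected) ∧
      (∀ j, v j (B j) ≤ v j (π j)) := by
  subst hG
  obtain rfl : desc = descendants parent := funext hdesc
  have hmem : ∀ j, j ∈ B (head hreach B j) := mem_head hreach B hB1
  have hsame : ∀ i j, i ∈ B (head hreach B j) → head hreach B i = head hreach B j :=
    fun i j hi => head_eq_of_mem hreach B hroot hB1 (fun i => (hB3 i).preconnected)
      (head_head hreach B j) hi (hB2 _ hi)
  exact ⟨fun j => B (head hreach B j), hmem, fun i j hi => congrArg B (hsame i j hi),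
    fun j => ⟨head hreach B j, rfl⟩, fun j => hB3 _, fun j => hB4 _ j (hmem j)⟩

theorem stmt11 {N : Type*} [Fintype N] (r : N) (parent : N → N)
    (hroot : parent r = r) (hreach : ∀ i : N, ∃ k : ℕ, parent^[k] i = r)
    (desc : N → Set N) (hdesc : ∀ i, desc i = {j | ∃ k : ℕ, parent^[k] j = i})
    (G : SimpleGraph N) (hG : G = SimpleGraph.fromRel (fun a b => parent a = b))
    (v : N → Set N → ℝ) (B : N → Set N)
    (hB1 : ∀ i, i ∈ B i) (hB2 : ∀ i, B i ⊆ desc i)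
    (hB3 : ∀ i, (G.induce (B i)).Connected)
    (hB4 : ∀ i, ∀ j ∈ B i, v j (B j) ≤ v j (B i)) :
    ∃ π : N → Set N,
      (∀ j, j ∈ π j) ∧
      (∀ i j, i ∈ π j → π i = π j) ∧
      (∀ j, ∃ i, π j = B i) ∧
      (∀ j, (G.induce (π j)).Connected) ∧
      (∀ j, v j (B j) ≤ v j (π j)) :=
  stmt11_general r parent hroot hreach desc hdesc G hG v B hB1 hB2 hB3 hB4
end

section
/- Let π be a partition of players (nodes of a rooted tree) satisfying v_j(π(j)) ≥ v_j(B_j) for all j, where each B_i satisfies: for every coalition X with i ∈ X ⊆ desc(i), X connected, and v_j(X) ≥ v_j(B_j) for all j ∈ X \ {i}, the probability over X ∼ D of v_i(X) > v_i(B_i) is less than ε/n. Then the probability over S ∼ D that S strongly blocks π and is connected within the tree is less than ε. -/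
open MeasureTheory

/-!
Let `S` be a connected coalition that strongly blocks `π`, and let `i` be its highest node: the
node of `S` whose parent lies outside `S` (or which is the root). Every edge of the tree joins a
node to its parent, so walking inside `S` away from `i` never climbs above `i`: hence
`S ⊆ desc i`. Since `v j (B j) ≤ v j (π j) < v j S` for every `j ∈ S`, the coalition `S` is one of
the events that `hB` bounds for the player `i`, and a union bound over the `n` players gives
`n · (ε / n) = ε`.
-/

lemma SimpleGraph.Preconnected.induction_on {V : Type*} {H : SimpleGraph V} (hH : H.Preconnected)
    {P : V → Prop} {u : V} (hu : P u) (hadj : ∀ v w, H.Adj v w → P v → P w) (w : V) :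
    P w := by
  obtain ⟨p⟩ := hH u w
  induction p with
  | nil => exact hu
  | cons h _ ih => exact ih (hadj _ _ h hu)

section ParentMap

variable {N : Type*} {parent : N → N}

lemma exists_mem_parent_mem_imp_eq {r : N} (hroot : parent r = r)
    (hreach : ∀ i, ∃ k : ℕ, parent^[k] i = r) {S : Set N} (hS : S.Nonempty) :
    ∃ i ∈ S, parent i ∈ S → parent i = i := by
  by_contra! h
  obtain ⟨x, hx⟩ := hS
  obtain ⟨k, hk⟩ := hreach x
  have hclosed : Set.MapsTo parent S S := fun i hi => (h i hi).1
  have hr : r ∈ S := hk ▸ hclosed.iterate k hx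
  exact (h r hr).2 hroot

lemma subset_descendants_of_induce_connected {S : Set N}
    (hS : ((SimpleGraph.fromRel fun a b => parent a = b).induce S).Connected)
    {i : N} (hi : i ∈ S) (htop : parent i ∈ S → parent i = i) :
    S ⊆ {j | ∃ k : ℕ, parent^[k] j = i} := by
  intro j hj
  refine hS.preconnected.induction_on (P := fun x : S => ∃ k : ℕ, parent^[k] x = i)
    (u := ⟨i, hi⟩) ⟨0, rfl⟩ ?_ ⟨j, hj⟩
  rintro ⟨z, hz⟩ ⟨u, hu⟩ hadj ⟨k, hk⟩
  obtain ⟨hne, hzu | huz⟩ := (SimpleGraph.fromRel_adj _ z u).1 (SimpleGraph.comap_adj.1 hadj)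
  · cases k with
    | zero =>
      rw [Function.iterate_zero_apply] at hk
      subst hk hzu
      exact absurd (htop hu) hne.symm
    | succ k => exact ⟨k, by rwa [Function.iterate_succ_apply, hzu] at hk⟩
  · exact ⟨k + 1, by rw [Function.iterate_succ_apply, huz, hk]⟩

end ParentMap

lemma measure_lt_of_subset_iUnion {α ι : Type*} [MeasurableSpace α] [Fintype ι] [Nonempty ι]
    (μ : Measure α) {A : Set α} {s : ι → Set α} (hA : A ⊆ ⋃ i, s i) {c : ENNReal}
    (hs : ∀ i, μ (s i) < c) : μ A < Fintype.card ι * c := by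
  calc μ A ≤ ∑ i, μ (s i) := (measure_mono hA).trans (measure_iUnion_fintype_le μ s)
    _ < ∑ _i : ι, c := ENNReal.sum_lt_sum_of_nonempty Finset.univ_nonempty fun i _ => hs i
    _ = Fintype.card ι * c := by simp

lemma natCast_mul_ofReal_div {n : ℕ} (hn : 0 < n) (ε : ℝ) :
    (n : ENNReal) * ENNReal.ofReal (ε / n) = ENNReal.ofReal ε := by
  rw [← ENNReal.ofReal_natCast, ← ENNReal.ofReal_mul n.cast_nonneg,
    mul_div_cancel₀ ε (by exact_mod_cast hn.ne')]

theorem stmt12_general {N : Type*} [Fintype N] [MeasurableSpace (Set N)]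
    (r : N) (parent : N → N)
    (hroot : parent r = r) (hreach : ∀ i : N, ∃ k : ℕ, parent^[k] i = r)
    (desc : N → Set N) (hdesc : ∀ i, desc i = {j | ∃ k : ℕ, parent^[k] j = i})
    (G : SimpleGraph N) (hG : G = SimpleGraph.fromRel (fun a b => parent a = b))
    (v : N → Set N → ℝ) (B : N → Set N) (π : N → Set N)
    (D : Measure (Set N))
    (ε : ℝ) (n : ℕ) (hn : n = Fintype.card N)
    (hπ : ∀ j, v j (B j) ≤ v j (π j))
    (hB : ∀ i : N, D {X : Set N | i ∈ X ∧ X ⊆ desc i ∧ (G.induce X).Connected ∧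
        (∀ j ∈ X, j ≠ i → v j (B j) ≤ v j X) ∧ v i (B i) < v i X}
      < ENNReal.ofReal (ε / n)) :
    D {S : Set N | (G.induce S).Connected ∧ ∀ j ∈ S, v j (π j) < v j S}
      < ENNReal.ofReal ε := by
  subst hn
  have : Nonempty N := ⟨r⟩
  have hcover : {S : Set N | (G.induce S).Connected ∧ ∀ j ∈ S, v j (π j) < v j S} ⊆
      ⋃ i, {X : Set N | i ∈ X ∧ X ⊆ desc i ∧ (G.induce X).Connected ∧
        (∀ j ∈ X, j ≠ i → v j (B j) ≤ v j X) ∧ v i (B i) < v i X} := by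
    rintro S ⟨hconn, hblock⟩
    obtain ⟨i, hi, htop⟩ :=
      exists_mem_parent_mem_imp_eq hroot hreach (Set.nonempty_coe_sort.1 hconn.nonempty)
    have hSi : S ⊆ desc i := hdesc i ▸ subset_descendants_of_induce_connected (hG ▸ hconn) hi htop
    exact Set.mem_iUnion.2 ⟨i, hi, hSi, hconn, fun j hj _ => ((hπ j).trans_lt (hblock j hj)).le,
      (hπ i).trans_lt (hblock i hi)⟩
  calc D _ < Fintype.card N * ENNReal.ofReal (ε / Fintype.card N) :=
        measure_lt_of_subset_iUnion D hcover hB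
    _ = ENNReal.ofReal ε := natCast_mul_ofReal_div Fintype.card_pos ε

theorem stmt12 {N : Type*} [Fintype N] [MeasurableSpace (Set N)]
    (r : N) (parent : N → N)
    (hroot : parent r = r) (hreach : ∀ i : N, ∃ k : ℕ, parent^[k] i = r)
    (desc : N → Set N) (hdesc : ∀ i, desc i = {j | ∃ k : ℕ, parent^[k] j = i})
    (G : SimpleGraph N) (hG : G = SimpleGraph.fromRel (fun a b => parent a = b))
    (v : N → Set N → ℝ) (B : N → Set N) (π : N → Set N)
    (D : Measure (Set N)) [IsProbabilityMeasure D]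
    (ε : ℝ) (n : ℕ) (hn : n = Fintype.card N)
    (hπ : ∀ j, v j (B j) ≤ v j (π j))
    (hB : ∀ i : N, D {X : Set N | i ∈ X ∧ X ⊆ desc i ∧ (G.induce X).Connected ∧
        (∀ j ∈ X, j ≠ i → v j (B j) ≤ v j X) ∧ v i (B i) < v i X}
      < ENNReal.ofReal (ε / n)) :
    D {S : Set N | (G.induce S).Connected ∧ ∀ j ∈ S, v j (π j) < v j S}
      < ENNReal.ofReal ε :=
  stmt12_general r parent hroot hreach desc hdesc G hG v B π D ε n hn hπ hB
end
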